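/- arXiv:1412.7130 — 4 statements merged into one kernel-verified Lean document; each statement's English description precedes it below -/
import Mathlib

section
/- Let G = (V,E,ω) be a finite weighted directed graph with vertex set V = {1,…,n} and weighted adjacency matrix M_G ∈ ℂⁿˣⁿ, let λ₀ ∈ ℂ, and let S ⊂ V be a λ₀-structural set of G. Then the restriction map u ↦ u_S = (u_i)_{i∈S} is a linear isomorphism from the eigenspace {u ∈ ℂⁿ : M_G u = λ₀ u} onto the eigenspace {v ∈ ℂ^S : R_S(G,λ₀) v = λ₀ v} of the reduced matrix. -/
/-! Common definitions for isospectral graph reductions (Bunimovich–Webb). -/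

section IGRDefs

variable {V : Type*} {K : Type*} [Field K]

/-- A cycle of the graph with edge relation `E`, encoded as the list of its vertices
`(i₀, …, i_p)` with `i₀ = i_p`: length at least 2 (`p ≥ 1`), consecutive pairs are edges,
first vertex equals last vertex, and all vertices are distinct except `i₀ = i_p`. -/
def IsCycleList (E : V → V → Prop) (l : List V) : Prop :=
  2 ≤ l.length ∧ l.Chain' E ∧ l.head? = l.getLast? ∧ l.dropLast.Nodup

/-- `S` is a `lam`-structural set: it is nonempty, every cycle that is not a loop
(i.e. of list-length `> 2`) contains a vertex of `S`, and `ω i i ≠ lam` off `S`. -/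
def IsStructural {α : Type*} (E : V → V → Prop) (ω : V → V → α) (lam : α) (S : Set V) :
    Prop :=
  S.Nonempty ∧ (∀ l, IsCycleList E l → 2 < l.length → ∃ v ∈ l, v ∈ S) ∧
    ∀ i, i ∉ S → ω i i ≠ lam

/-- A branch of `(G,S)` from `i` to `j`, encoded as the list of its vertices
`(i₀, i₁, …, i_p)`: a path (all vertices distinct, except that possibly `i₀ = i_p`)
of length `p ≥ 1` whose interior vertices `i₁, …, i_{p-1}` lie outside `S`. -/
def IsBranchList (E : V → V → Prop) (S : Set V) (i j : V) (l : List V) : Prop :=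
  2 ≤ l.length ∧ l.Chain' E ∧ l.head? = some i ∧ l.getLast? = some j ∧
    l.tail.Nodup ∧ l.dropLast.Nodup ∧ ∀ v ∈ l.tail.dropLast, v ∉ S

/-- The weight `ω(β,λ) = ω(i₀,i₁) ∏_{ℓ=1}^{p-1} ω(i_ℓ,i_{ℓ+1})/(λ - ω(i_ℓ,i_ℓ))`
of a branch `β = (i₀,…,i_p)`. -/
noncomputable def branchWeight (ω : V → V → K) (lam : K) : List V → K
  | [] => 0
  | [_] => 0
  | [i, j] => ω i j
  | i :: j :: k :: t => ω i j * branchWeight ω lam (j :: k :: t) / (lam - ω j j)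

/-- The entry `R_{ij}(G,S,λ) = Σ_{β ∈ B_{ij}} ω(β,λ)` of the (extended) reduced matrix. -/
noncomputable def Rentry (E : V → V → Prop) (S : Set V) (ω : V → V → K) (lam : K)
    (i j : V) : K :=
  ∑ᶠ l ∈ {l : List V | IsBranchList E S i j l}, branchWeight ω lam l

/-- `R^{(p)}_{ij}(G,S,λ)`: the sum of weights of branches of length `p` from `i` to `j`. -/
noncomputable def RentryN (E : V → V → Prop) (S : Set V) (ω : V → V → K) (lam : K)
    (p : ℕ) (i j : V) : K :=
  ∑ᶠ l ∈ {l : List V | IsBranchList E S i j l ∧ l.length = p + 1}, branchWeight ω lam l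

/-- `Sk E S k` is the set of vertices of depth `≤ k`: `S₀ = S` and
`S_{k+1} = S_k ∪ {i | every edge from i ends in S_k}`. -/
def Sk (E : V → V → Prop) (S : Set V) : ℕ → Set V
  | 0 => S
  | k + 1 => Sk E S k ∪ {i | ∀ j, E i j → j ∈ Sk E S k}

end IGRDefs

/-!
Splitting the branches that end at `j ∈ S` according to their second vertex gives
`R_ij = ω_ij + ∑_{k ∉ S, k ≠ i} ω_ik R_kj / (λ - ω_kk)`: prefixing an edge `i → k` to a branch
from `k` yields a branch from `i`, because a repeated `i` would close a cycle outside `S`.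
Hence extending `v : S → K` by `u_i = (∑_{j ∈ S} R_ij v_j) / (λ - ω_ii)` off `S` gives
`(M u)_i = λ u_i` off `S` and `(M u)_i = (R_S v)_i` on `S`. Conversely, off `S` the graph has
no cycles other than loops, so well-founded induction along its edges shows that a vector which
vanishes on `S` and satisfies `(M u)_i = λ u_i` off `S` is zero; thus every eigenvector of `M`
is the extension of its restriction to `S`.
-/

open Matrix Relation

theorem List.exists_nodup_isChain_cons_of_relationReflTransGen {α : Type*} {r : α → α → Prop}
    {a b : α} (h : ReflTransGen r a b) :
    ∃ l, IsChain r (a :: l) ∧ getLast (a :: l) (cons_ne_nil _ _) = b ∧ (a :: l).Nodup := by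
  induction h using ReflTransGen.head_induction_on with
  | refl => exact ⟨[], .singleton _, rfl, List.nodup_singleton _⟩
  | @head a c hac _ ih =>
    obtain ⟨l, hch, hlast, hnd⟩ := ih
    by_cases ha : a ∈ c :: l
    · obtain ⟨s, t, hst⟩ := List.append_of_mem ha
      refine ⟨t, hch.suffix ⟨s, hst.symm⟩, ?_, hnd.sublist (hst ▸ List.sublist_append_right _ _)⟩
      simpa [hst] using hlast
    · exact ⟨c :: l, hch.cons_cons hac, by simpa using hlast, List.nodup_cons.mpr ⟨ha, hnd⟩⟩

theorem Finset.sum_univ_eq_sum_subtype_add_ite_add_sum_erase {V M : Type*} [Fintype V]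
    [DecidableEq V] [AddCommMonoid M] (S : Set V) [DecidablePred (· ∈ S)] (f : V → M) (i : V) :
    ∑ k, f k = ∑ j : S, f j +
      ((if i ∈ S then 0 else f i) + ∑ k ∈ ({k | k ∉ S} : Finset V).erase i, f k) := by
  rw [← Finset.sum_filter_add_sum_filter_not Finset.univ (· ∈ S) f,
    Finset.sum_subtype _ (p := (· ∈ S)) (by simp) f]
  congr 1
  split_ifs with hi
  · rw [Finset.erase_eq_of_notMem (by simp [hi]), zero_add]
  · rw [Finset.add_sum_erase _ _ (by simp [hi])]

theorem Matrix.mem_eigenspace_mulVecLin_iff {ι K : Type*} [Fintype ι] [Field K]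
    {A : Matrix ι ι K} {μ : K} {u : ι → K} :
    u ∈ Module.End.eigenspace A.mulVecLin μ ↔ A *ᵥ u = μ • u := by
  rw [Module.End.mem_eigenspace_iff, Matrix.mulVecLin_apply]

section Structural

variable {V α : Type*} {E : V → V → Prop} {ω : V → V → α} {lam : α} {S : Set V}

theorem IsStructural.false_of_isChain_cycle (hstr : IsStructural E ω lam S) {a : V}
    {q : List V} (hc : List.IsChain E (a :: (q ++ [a]))) (hnd : (q ++ [a]).Nodup)
    (hq : q ≠ []) (hoff : ∀ v ∈ q ++ [a], v ∉ S) : False := by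
  have hcyc : IsCycleList E ((a :: q) ++ [a]) :=
    ⟨by simp, hc, by rw [List.getLast?_concat]; rfl,
      by rw [List.dropLast_concat]; exact List.nodup_append_comm.mp hnd⟩
  obtain ⟨-, hcycles, -⟩ := hstr
  obtain ⟨v, hv, hvS⟩ := hcycles _ hcyc (by simpa using List.length_pos_iff.mpr hq)
  rcases List.mem_cons.mp hv with rfl | hv
  · exact hoff v (by simp) hvS
  · exact hoff v hv hvS

theorem IsStructural.notMem_of_isChain (hstr : IsStructural E ω lam S) {i k : V} {p : List V}
    (hc : List.IsChain E (k :: p)) (hnd : (k :: p).Nodup) (hoff : ∀ v ∈ k :: p, v ∉ S)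
    (hik : E i k) (hki : k ≠ i) : i ∉ k :: p := by
  intro hi
  obtain ⟨q, r, hqr⟩ := List.append_of_mem hi
  have hpre : q ++ [i] <+: k :: p := ⟨r, by simp [hqr]⟩
  obtain ⟨b, q, rfl⟩ := List.exists_cons_of_ne_nil (l := q) (by rintro rfl; simp_all)
  obtain rfl : k = b := (List.cons_eq_cons.mp hqr).1
  exact hstr.false_of_isChain_cycle ((hc.prefix hpre).cons_cons hik) (hnd.sublist hpre.sublist)
    (List.cons_ne_nil _ _) fun v hv => hoff v (hpre.subset hv)

def OffEdge (E : V → V → Prop) (S : Set V) (a b : V) : Prop :=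
  a ∉ S ∧ b ∉ S ∧ a ≠ b ∧ E a b

theorem IsStructural.not_transGen_offEdge (hstr : IsStructural E ω lam S) (k : V) :
    ¬ TransGen (OffEdge E S) k k := by
  intro h
  obtain ⟨m, hkm, hmk⟩ := TransGen.head'_iff.mp h
  obtain ⟨l, hch, hlast, hnd⟩ := List.exists_nodup_isChain_cons_of_relationReflTransGen hmk
  have hP := List.dropLast_append_getLast (List.cons_ne_nil m l)
  rw [hlast] at hP
  refine hstr.false_of_isChain_cycle (a := k) (q := (m :: l).dropLast) ?_ (by rwa [hP]) ?_ ?_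
  · rw [hP]
    exact (hch.cons_cons hkm).imp fun _ _ h => h.2.2.2
  · intro hq
    rw [hq] at hP
    exact hkm.2.2.1 (List.cons_eq_cons.mp hP).1
  · rw [hP]
    exact hch.induction (· ∉ S) _ (fun _ _ h _ => h.2.1) fun _ => hkm.2.1

theorem IsStructural.wellFounded_offEdge [Finite V] (hstr : IsStructural E ω lam S) :
    WellFounded (flip (OffEdge E S)) := by
  have : IsTrans V (TransGen (flip (OffEdge E S))) := ⟨fun _ _ _ => TransGen.trans⟩
  have : Std.Irrefl (TransGen (flip (OffEdge E S))) :=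
    ⟨fun k h => hstr.not_transGen_offEdge k h.swap⟩
  exact Subrelation.wf TransGen.single (Finite.wellFounded_of_trans_of_irrefl _)

end Structural

section Branches

variable {V : Type*} {E : V → V → Prop} {S : Set V}

theorem isBranchList_iff {i j : V} {l : List V} :
    IsBranchList E S i j l ↔ 2 ≤ l.length ∧ l.IsChain E ∧ l.head? = some i ∧
      l.getLast? = some j ∧ l.tail.Nodup ∧ l.dropLast.Nodup ∧ ∀ v ∈ l.tail.dropLast, v ∉ S :=
  Iff.rfl

theorem IsBranchList.exists_eq_cons_append {i j : V} {l : List V}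
    (h : IsBranchList E S i j l) : ∃ p, l = i :: (p ++ [j]) := by
  obtain ⟨hlen, -, hh, hl, -⟩ := h
  obtain _ | ⟨a, _ | ⟨b, t⟩⟩ := l
  · simp at hlen
  · simp at hlen
  obtain rfl : a = i := by simpa using hh
  rw [List.getLast?_cons_cons] at hl
  exact ⟨(b :: t).dropLast, by rw [List.dropLast_append_getLast? j hl]⟩

theorem isBranchList_cons_append_iff {i j : V} {p : List V} :
    IsBranchList E S i j (i :: (p ++ [j])) ↔
      (i :: (p ++ [j])).IsChain E ∧ (p ++ [j]).Nodup ∧ (i :: p).Nodup ∧ ∀ v ∈ p, v ∉ S := by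
  simp [isBranchList_iff, List.dropLast_cons_of_ne_nil, List.getLast?_cons]

theorem isBranchList_pair_iff {i j k : V} : IsBranchList E S i j [i, k] ↔ E i k ∧ k = j := by
  simp [isBranchList_iff]

theorem IsStructural.isBranchList_cons_cons_iff {α : Type*} {ω : V → V → α} {lam : α}
    (hstr : IsStructural E ω lam S) {i j k : V} (hj : j ∈ S) {p : List V} :
    IsBranchList E S i j (i :: k :: (p ++ [j])) ↔
      (k ∉ S ∧ k ≠ i ∧ E i k) ∧ IsBranchList E S k j (k :: (p ++ [j])) := by
  have hcons := isBranchList_cons_append_iff (E := E) (S := S) (i := i) (j := j) (p := k :: p)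
  rw [List.cons_append] at hcons
  rw [hcons, isBranchList_cons_append_iff]
  simp only [List.isChain_cons_cons, List.nodup_cons, List.mem_cons, forall_eq_or_imp]
  constructor
  · rintro ⟨⟨hik, hc⟩, ⟨-, hpj⟩, ⟨hi, hk, hp⟩, hkS, hpS⟩
    exact ⟨⟨hkS, fun h => hi (.inl h.symm), hik⟩, hc, hpj, ⟨hk, hp⟩, hpS⟩
  · rintro ⟨⟨hkS, hki, hik⟩, hc, hpj, ⟨hk, hp⟩, hpS⟩
    have hkj : k ∉ p ++ [j] := by simpa [hk] using fun h : k = j => hkS (h ▸ hj)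
    have hi := hstr.notMem_of_isChain (hc.prefix ⟨[j], by simp⟩) (List.nodup_cons.mpr ⟨hk, hp⟩)
      (by simpa [hkS] using hpS) hik hki
    exact ⟨⟨hik, hc⟩, ⟨hkj, hpj⟩, ⟨by simpa using hi, hk, hp⟩, hkS, hpS⟩

theorem IsStructural.setOf_isBranchList {α : Type*} {ω : V → V → α} {lam : α}
    (hstr : IsStructural E ω lam S) {i j : V} (hj : j ∈ S) :
    {l | IsBranchList E S i j l} = {l | E i j ∧ l = [i, j]} ∪
      ⋃ k, (i :: ·) '' {l | (k ∉ S ∧ k ≠ i ∧ E i k) ∧ IsBranchList E S k j l} := by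
  ext l
  simp only [Set.mem_ofPred_eq, Set.mem_union, Set.mem_iUnion, Set.mem_image]
  constructor
  · intro hl
    obtain ⟨_ | ⟨k, p⟩, rfl⟩ := hl.exists_eq_cons_append
    · exact .inl ⟨(isBranchList_pair_iff.mp hl).1, rfl⟩
    · exact .inr ⟨k, _, (hstr.isBranchList_cons_cons_iff hj).mp hl, rfl⟩
  · rintro (⟨hij, rfl⟩ | ⟨k, t, ht, rfl⟩)
    · exact isBranchList_pair_iff.mpr ⟨hij, rfl⟩
    · obtain ⟨p, rfl⟩ := ht.2.exists_eq_cons_append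
      exact (hstr.isBranchList_cons_cons_iff hj).mpr ht

end Branches

section Recursion

variable {V K : Type*} [Field K] {E : V → V → Prop} {ω : V → V → K} {lam : K} {S : Set V}

theorem IsStructural.sub_diag_ne_zero (hstr : IsStructural E ω lam S) {i : V} (hi : i ∉ S) :
    lam - ω i i ≠ 0 :=
  sub_ne_zero.mpr (hstr.2.2 i hi).symm

theorem finite_setOf_isBranchList [Finite V] (E : V → V → Prop) (S : Set V) (i j : V) :
    {l | IsBranchList E S i j l}.Finite := by
  have := Fintype.ofFinite V
  refine (List.finite_length_le V (Fintype.card V + 1)).subset fun l hl => ?_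
  obtain ⟨p, rfl⟩ := hl.exists_eq_cons_append
  obtain ⟨-, -, -, -, -, hnd, -⟩ := hl
  have := hnd.length_le_card
  simp_all [List.dropLast_cons_of_ne_nil]

theorem branchWeight_cons_cons (ω : V → V → K) (lam : K) (i k : V) {t : List V} (ht : t ≠ []) :
    branchWeight ω lam (i :: k :: t) = ω i k * branchWeight ω lam (k :: t) / (lam - ω k k) := by
  obtain ⟨a, t, rfl⟩ := List.exists_cons_of_ne_nil ht
  rfl

theorem finsum_mem_branchWeight_cons (ω : V → V → K) (lam : K) (i k j : V) :
    ∑ᶠ l ∈ {l | IsBranchList E S k j l}, branchWeight ω lam (i :: l) =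
      ω i k * Rentry E S ω lam k j / (lam - ω k k) := by
  rw [Rentry, mul_div_right_comm, mul_finsum_mem]
  refine finsum_mem_congr rfl fun l hl => ?_
  obtain ⟨p, rfl⟩ := hl.exists_eq_cons_append
  rw [branchWeight_cons_cons _ _ _ _ (by simp), mul_div_right_comm]

theorem IsStructural.rentry_eq_add_sum [Fintype V] [DecidableEq V] [DecidablePred (· ∈ S)]
    (hstr : IsStructural E ω lam S) (hω : ∀ i j, ¬ E i j → ω i j = 0) {j : V} (hj : j ∈ S)
    (i : V) :
    Rentry E S ω lam i j = ω i j +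
      ∑ k ∈ ({k | k ∉ S} : Finset V).erase i, ω i k * Rentry E S ω lam k j / (lam - ω k k) := by
  set T : V → Set (List V) := fun k => {l | (k ∉ S ∧ k ≠ i ∧ E i k) ∧ IsBranchList E S k j l}
  have hT : ∀ k, (T k).Finite := fun k =>
    (finite_setOf_isBranchList E S k j).subset fun _ h => h.2
  have hdisj : Disjoint {l | E i j ∧ l = [i, j]} (⋃ k, (i :: ·) '' T k) := by
    refine Set.disjoint_left.mpr ?_
    rintro _ ⟨-, rfl⟩ hl
    obtain ⟨k, t, ⟨-, hlen, -⟩, hti⟩ := Set.mem_iUnion.mp hl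
    simp [List.cons_injective hti] at hlen
  have hpair : Pairwise (Function.onFun Disjoint fun k => (i :: ·) '' T k) := by
    refine fun k k' hkk' => Set.disjoint_left.mpr ?_
    rintro _ ⟨t, ⟨-, -, -, hk, -⟩, rfl⟩ ⟨t', ⟨-, -, -, hk', -⟩, htt'⟩
    obtain rfl := List.cons_injective htt'
    exact hkk' (Option.some_injective _ (hk.symm.trans hk'))
  rw [Rentry, hstr.setOf_isBranchList hj, finsum_mem_union hdisj
    ((Set.finite_singleton [i, j]).subset fun _ h => h.2)
    (Set.finite_iUnion fun k => (hT k).image _), finsum_mem_iUnion hpair fun k => (hT k).image _]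
  congr 1
  · by_cases hij : E i j
    · simp only [hij, true_and, Set.ofPred_eq_eq_singleton, finsum_mem_singleton]
      rfl
    · simp [hij, hω i j]
  · rw [finsum_eq_sum_of_fintype,
      ← Finset.sum_subset (Finset.subset_univ (({k | k ∉ S} : Finset V).erase i)) ?_]
    · refine Finset.sum_congr rfl fun k hk => ?_
      obtain ⟨hki, hkS⟩ : k ≠ i ∧ k ∉ S := by simpa using hk
      rw [finsum_mem_image List.cons_injective.injOn]
      by_cases hik : E i k
      · simp only [T, hkS, hki, hik, not_false_eq_true, ne_eq, and_self, true_and]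
        exact finsum_mem_branchWeight_cons ω lam i k j
      · simp [T, hik, hω i k hik]
    · intro k _ hk
      have hTk : T k = ∅ := Set.eq_empty_of_forall_notMem fun l hl =>
        hk (Finset.mem_erase.mpr ⟨hl.1.2.1, by simpa using hl.1.1⟩)
      simp [hTk]

end Recursion

section Eigen

variable {V K : Type*} [Fintype V] [Field K] {E : V → V → Prop} {ω : V → V → K} {lam : K}
  {S : Set V}

theorem IsStructural.eq_zero_of_mulVec_eq (hstr : IsStructural E ω lam S)
    (hω : ∀ i j, ¬ E i j → ω i j = 0) {d : V → K} (hS : ∀ i ∈ S, d i = 0)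
    (hd : ∀ i ∉ S, (Matrix.of ω *ᵥ d) i = lam * d i) : d = 0 := by
  funext i
  induction i using hstr.wellFounded_offEdge.induction with
  | _ i ih =>
  by_cases hi : i ∈ S
  · exact hS i hi
  have hdiag : (Matrix.of ω *ᵥ d) i = ω i i * d i := by
    refine Finset.sum_eq_single i (fun k _ hki => ?_) (by simp)
    by_cases hk : k ∈ S
    · simp [hS k hk]
    by_cases hik : E i k
    · simp [ih k ⟨hi, hk, hki.symm, hik⟩]
    · simp [hω i k hik]
  have hcancel : (lam - ω i i) * d i = 0 := by linear_combination (hd i hi).symm.trans hdiag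
  exact (mul_eq_zero.mp hcancel).resolve_left (hstr.sub_diag_ne_zero hi)

noncomputable def branchMatrix (E : V → V → Prop) (S : Set V) (ω : V → V → K) (lam : K) :
    Matrix V S K :=
  Matrix.of fun i j => Rentry E S ω lam i j

noncomputable def reducedMatrix (E : V → V → Prop) (S : Set V) (ω : V → V → K) (lam : K) :
    Matrix S S K :=
  Matrix.of fun i j => Rentry E S ω lam i j

variable [DecidablePred (· ∈ S)]

theorem reducedMatrix_mulVec (v : S → K) (i : S) :
    (reducedMatrix E S ω lam *ᵥ v) i = (branchMatrix E S ω lam *ᵥ v) i :=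
  rfl

noncomputable def extendByBranches (E : V → V → Prop) (S : Set V) [DecidablePred (· ∈ S)]
    (ω : V → V → K) (lam : K) (v : S → K) (i : V) : K :=
  if h : i ∈ S then v ⟨i, h⟩ else (branchMatrix E S ω lam *ᵥ v) i / (lam - ω i i)

theorem extendByBranches_coe (v : S → K) (j : S) :
    extendByBranches E S ω lam v j = v j := by
  simp [extendByBranches]

variable [DecidableEq V]

theorem IsStructural.mulVec_extendByBranches (hstr : IsStructural E ω lam S)
    (hω : ∀ i j, ¬ E i j → ω i j = 0) (v : S → K) (i : V) :
    (Matrix.of ω *ᵥ extendByBranches E S ω lam v) i = (branchMatrix E S ω lam *ᵥ v) i +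
      if i ∈ S then 0 else ω i i * extendByBranches E S ω lam v i := by
  set x := extendByBranches E S ω lam v
  have hR : (branchMatrix E S ω lam *ᵥ v) i = ∑ j : S, ω i j * x j +
      ∑ k ∈ ({k | k ∉ S} : Finset V).erase i, ω i k * x k := by
    calc (branchMatrix E S ω lam *ᵥ v) i
        = ∑ j : S, (ω i j + ∑ k ∈ ({k | k ∉ S} : Finset V).erase i,
            ω i k * Rentry E S ω lam k j / (lam - ω k k)) * v j :=
          Finset.sum_congr rfl fun j _ => by rw [← hstr.rentry_eq_add_sum hω j.2 i]; rfl
      _ = ∑ j : S, ω i j * v j + ∑ k ∈ ({k | k ∉ S} : Finset V).erase i,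
            ω i k * ((branchMatrix E S ω lam *ᵥ v) k / (lam - ω k k)) := by
          simp only [add_mul, Finset.sum_add_distrib, Finset.sum_mul, mulVec, dotProduct,
            Finset.mul_sum, Finset.sum_div]
          rw [Finset.sum_comm]
          congr! 3 with k - j -
          simp only [branchMatrix, of_apply]
          ring
      _ = _ := by
          congr 1
          · exact Finset.sum_congr rfl fun j _ => by simp only [x, extendByBranches_coe]
          · refine Finset.sum_congr rfl fun k hk => ?_
            obtain ⟨-, hkS⟩ : k ≠ i ∧ k ∉ S := by simpa using hk
            simp [x, extendByBranches, hkS]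
  rw [Matrix.mulVec, dotProduct, Finset.sum_univ_eq_sum_subtype_add_ite_add_sum_erase S _ i, hR]
  simp only [Matrix.of_apply]
  split_ifs <;> ring

theorem IsStructural.mulVec_extendByBranches_of_mem (hstr : IsStructural E ω lam S)
    (hω : ∀ i j, ¬ E i j → ω i j = 0) (v : S → K) {i : V} (hi : i ∈ S) :
    (Matrix.of ω *ᵥ extendByBranches E S ω lam v) i = (branchMatrix E S ω lam *ᵥ v) i := by
  rw [hstr.mulVec_extendByBranches hω, if_pos hi, add_zero]

theorem IsStructural.mulVec_extendByBranches_of_notMem (hstr : IsStructural E ω lam S)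
    (hω : ∀ i j, ¬ E i j → ω i j = 0) (v : S → K) {i : V} (hi : i ∉ S) :
    (Matrix.of ω *ᵥ extendByBranches E S ω lam v) i = lam * extendByBranches E S ω lam v i := by
  have hden := hstr.sub_diag_ne_zero hi
  rw [hstr.mulVec_extendByBranches hω, if_neg hi]
  simp only [extendByBranches, hi, dite_false]
  field_simp
  ring

theorem IsStructural.extendByBranches_restrict (hstr : IsStructural E ω lam S)
    (hω : ∀ i j, ¬ E i j → ω i j = 0) {u : V → K}
    (hu : u ∈ Module.End.eigenspace (Matrix.of ω).mulVecLin lam) :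
    extendByBranches E S ω lam (fun j : S => u j) = u := by
  rw [mem_eigenspace_mulVecLin_iff] at hu
  rw [← sub_eq_zero]
  refine hstr.eq_zero_of_mulVec_eq hω (fun i hi => ?_) (fun i hi => ?_)
  · simp [extendByBranches, hi]
  · simp [mulVec_sub, hstr.mulVec_extendByBranches_of_notMem hω _ hi, hu, mul_sub]

theorem IsStructural.restrict_mem_eigenspace (hstr : IsStructural E ω lam S)
    (hω : ∀ i j, ¬ E i j → ω i j = 0) {u : V → K}
    (hu : u ∈ Module.End.eigenspace (Matrix.of ω).mulVecLin lam) :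
    (fun j : S => u j) ∈ Module.End.eigenspace (reducedMatrix E S ω lam).mulVecLin lam := by
  rw [mem_eigenspace_mulVecLin_iff]
  funext i
  calc (reducedMatrix E S ω lam *ᵥ fun j : S => u j) i
      = (Matrix.of ω *ᵥ extendByBranches E S ω lam (fun j : S => u j)) i := by
        rw [reducedMatrix_mulVec, hstr.mulVec_extendByBranches_of_mem hω _ i.2]
    _ = lam * u i := by
        rw [hstr.extendByBranches_restrict hω hu, (mem_eigenspace_mulVecLin_iff.mp hu)]
        rfl

theorem IsStructural.extendByBranches_mem_eigenspace (hstr : IsStructural E ω lam S)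
    (hω : ∀ i j, ¬ E i j → ω i j = 0) {v : S → K}
    (hv : v ∈ Module.End.eigenspace (reducedMatrix E S ω lam).mulVecLin lam) :
    extendByBranches E S ω lam v ∈ Module.End.eigenspace (Matrix.of ω).mulVecLin lam := by
  rw [mem_eigenspace_mulVecLin_iff] at hv ⊢
  funext i
  by_cases hi : i ∈ S
  · have hvi := congrFun hv ⟨i, hi⟩
    rw [reducedMatrix_mulVec] at hvi
    rw [hstr.mulVec_extendByBranches_of_mem hω v hi]
    simpa [extendByBranches, hi] using hvi
  · exact hstr.mulVec_extendByBranches_of_notMem hω v hi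

end Eigen

/-- For a `λ₀`-structural set `S`, the restriction map `u ↦ u_S` is a
linear isomorphism from the eigenspace `{u : M_G u = λ₀ u}` onto the eigenspace
`{v : R_S(G,λ₀) v = λ₀ v}` of the reduced matrix. -/
theorem restriction_eigenspace_linear_iso
    {n : ℕ} (E : Fin n → Fin n → Prop) (ω : Fin n → Fin n → ℂ)
    (hω : ∀ i j, ¬ E i j → ω i j = 0)
    (lam0 : ℂ) (S : Set (Fin n)) [DecidablePred (· ∈ S)]
    (hstr : IsStructural E ω lam0 S) :
    ∃ e : ↥(Module.End.eigenspace (Matrix.mulVecLin (Matrix.of ω)) lam0) ≃ₗ[ℂ]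
        ↥(Module.End.eigenspace
            (Matrix.mulVecLin (Matrix.of fun i j : ↥S =>
              Rentry E S ω lam0 (i : Fin n) (j : Fin n))) lam0),
      ∀ u, (e u : ↥S → ℂ) = fun i : ↥S => (u : Fin n → ℂ) i := by
  let restrict := (LinearMap.funLeft ℂ ℂ ((↑) : S → Fin n)).restrict
    fun u hu => hstr.restrict_mem_eigenspace hω hu
  have hinj : Function.Injective restrict := by
    intro u u' h
    apply Subtype.ext
    rw [← hstr.extendByBranches_restrict hω u.2, ← hstr.extendByBranches_restrict hω u'.2]
    exact congrArg (extendByBranches E S ω lam0) (congrArg Subtype.val h)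
  have hsurj : Function.Surjective restrict := fun v =>
    ⟨⟨_, hstr.extendByBranches_mem_eigenspace hω v.2⟩,
      Subtype.ext (funext (extendByBranches_coe v.1))⟩
  exact ⟨LinearEquiv.ofBijective restrict ⟨hinj, hsurj⟩, fun _ => rfl⟩
end

section
/- Let G = (V,E,ω) be a finite weighted directed graph with weighted adjacency matrix M_G, and let S ⊂ V be a 1-structural set of G with ω(ℓ,ℓ) = 0 for all ℓ ∈ V∖S. Write S̄ = V∖S and decompose M_G into the blocks M_{SS}, M_{SS̄}, M_{S̄S}, M_{S̄S̄} indexed by S and S̄. Then for all i,j ∈ S: R^{(1)}_{ij}(G,S,1) = ω(i,j), and for every n ≥ 2, R^{(n)}_{ij}(G,S,1) = (M_{SS̄} · (M_{S̄S̄})^{n−2} · M_{S̄S})_{ij}, where R^{(n)}_{ij}(G,S,1) = Σ_{β∈B^{(n)}_{ij}} ω(β,1) is the sum of weights of branches of length n from i to j. -/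
/-! On a branch between two vertices of `S` every interior vertex `v` lies off `S`, so
`1 - ω(v,v) = 1` and the weight of the branch is the plain product of its edge weights.
Conversely, a walk `i → c₁ → ⋯ → c_{n-1} → j` with every `c_t ∉ S` and nonzero weight is already
a branch: its steps are edges, none of them is a loop (loop weights vanish off `S`), and a
repeated interior vertex would close a cycle that is not a loop and avoids `S`. So `R^{(n)}_{ij}`
is the sum of the edge-weight products of all such walks, which is the `(i,j)` entry of
`M_{SS̄} M_{S̄S̄}^{n-2} M_{S̄S}`. -/

section BranchSums

variable {V : Type*}

section PathWeight

variable {R : Type*} [CommSemiring R]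

noncomputable def pathWeight (ω : V → V → R) : List V → R
  | [] => 1
  | [_] => 1
  | a :: b :: t => ω a b * pathWeight ω (b :: t)

theorem isChain_of_pathWeight_ne_zero {ω : V → V → R} :
    ∀ {l : List V}, pathWeight ω l ≠ 0 → l.IsChain (fun a b => ω a b ≠ 0)
  | [], _ => .nil
  | [_], _ => .singleton _
  | _ :: _ :: _, h =>
    .cons_cons (left_ne_zero_of_mul h) (isChain_of_pathWeight_ne_zero (right_ne_zero_of_mul h))

end PathWeight

theorem branchWeight_one_eq_pathWeight {K : Type*} [Field K] (ω : V → V → K) :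
    ∀ {l : List V}, 2 ≤ l.length → (∀ v ∈ l.tail.dropLast, ω v v = 0) →
      branchWeight ω 1 l = pathWeight ω l
  | [_, _], _, _ => by simp [branchWeight, pathWeight]
  | i :: b :: c :: t, _, h => by
    have ih := branchWeight_one_eq_pathWeight ω (l := b :: c :: t) (by simp)
      fun v hv => h v (List.mem_cons_of_mem _ hv)
    rw [branchWeight, ih, h b (by simp), sub_zero, div_one]
    rfl

theorem nodup_of_isChain_of_forall_notMem {E : V → V → Prop} {S : Set V}
    (hcyc : ∀ l, IsCycleList E l → 2 < l.length → ∃ v ∈ l, v ∈ S)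
    {r : V → V → Prop} (hrE : ∀ a b, r a b → E a b) (hloop : ∀ a ∉ S, ¬r a a) :
    ∀ {l : List V}, l.IsChain r → (∀ v ∈ l, v ∉ S) → l.Nodup
  | [], _, _ => List.nodup_nil
  | a :: t, hl, hS => by
    have ht : t.Nodup := nodup_of_isChain_of_forall_notMem hcyc hrE hloop hl.tail
      fun v hv => hS v (List.mem_cons_of_mem _ hv)
    refine List.nodup_cons.mpr ⟨fun ha => ?_, ht⟩
    obtain ⟨u, w, rfl⟩ := List.append_of_mem ha
    have hu : u ≠ [] := by
      rintro rfl
      exact hloop a (hS a (by simp)) (List.isChain_cons_cons.mp hl).1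
    have hau : a ∉ u := fun h => List.disjoint_of_nodup_append ht h (by simp)
    have hcycle : IsCycleList E (a :: u ++ [a]) := by
      refine ⟨by simp, (hl.prefix ⟨w, by simp⟩).imp hrE, by rw [List.getLast?_concat]; rfl, ?_⟩
      rw [List.dropLast_concat]
      exact List.nodup_cons.mpr ⟨hau, ht.sublist (List.sublist_append_left _ _)⟩
    obtain ⟨v, hv, hvS⟩ := hcyc _ hcycle (by simpa using List.length_pos_of_ne_nil hu)
    exact hS v (by simp at hv ⊢; tauto) hvS

theorem isBranchList_iff_s5 {E : V → V → Prop} {S : Set V} {i j : V} (hi : i ∈ S) (hj : j ∈ S)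
    {l : List V} :
    IsBranchList E S i j l ↔
      ∃ c, l = i :: c ++ [j] ∧ (∀ v ∈ c, v ∉ S) ∧ l.IsChain E ∧ c.Nodup := by
  constructor
  · rintro ⟨hlen, hE, hhead, hlast, htail, -, hS⟩
    obtain ⟨t, rfl⟩ : ∃ t, l = i :: t := ⟨l.tail, (List.cons_head?_tail hhead).symm⟩
    obtain ⟨b, t, rfl⟩ : ∃ b t', t = b :: t' := List.exists_cons_of_ne_nil
      (List.ne_nil_of_length_pos (by simp at hlen; omega))
    have hsplit := List.dropLast_append_getLast? j (by simpa using hlast)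
    refine ⟨(b :: t).dropLast, by rw [List.cons_append, hsplit], hS, hE,
      htail.sublist (List.dropLast_sublist _)⟩
  · rintro ⟨c, rfl, hS, hE, hc⟩
    have hjc : j ∉ c := fun h => hS j h hj
    have hic : i ∉ c := fun h => hS i h hi
    refine ⟨by simp, hE, by simp, List.getLast?_concat .., ?_, ?_, by simpa using hS⟩
    · simpa using hc.concat hjc
    · rw [List.dropLast_concat]
      exact List.nodup_cons.mpr ⟨hic, hc⟩

section ListsOver

variable {α : Type*}

def listsOver (s : Set α) (k : ℕ) : Set (List α) :=
  {c | c.length = k ∧ ∀ v ∈ c, v ∈ s}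

theorem listsOver_zero (s : Set α) : listsOver s 0 = {[]} := by
  ext c
  simp +contextual [listsOver, List.length_eq_zero_iff]

theorem listsOver_succ (s : Set α) (k : ℕ) :
    listsOver s (k + 1) = ⋃ b ∈ s, List.cons b '' listsOver s k := by
  ext c
  cases c <;> simp [listsOver, and_left_comm]

theorem listsOver_finite [Finite α] (s : Set α) (k : ℕ) : (listsOver s k).Finite :=
  (List.finite_length_eq α k).subset fun _ hc => hc.1

theorem finsum_mem_listsOver_succ [Finite α] {M : Type*} [AddCommMonoid M] (s : Set α) (k : ℕ)
    (f : List α → M) :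
    ∑ᶠ c ∈ listsOver s (k + 1), f c = ∑ᶠ b ∈ s, ∑ᶠ c ∈ listsOver s k, f (b :: c) := by
  rw [listsOver_succ, finsum_mem_biUnion _ s.toFinite fun _ _ => (listsOver_finite s k).image _]
  · exact finsum_mem_congr rfl fun b _ => finsum_mem_image List.cons_injective.injOn
  · intro b _ b' _ hbb'
    simp only [Function.onFun]
    rw [Set.disjoint_iff]
    rintro _ ⟨⟨c, -, rfl⟩, ⟨c', -, h⟩⟩
    exact hbb' (List.cons_eq_cons.mp h).1.symm

end ListsOver

section WalkSums

open Matrix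

variable {R : Type*} [CommSemiring R] (ω : V → V → R) (T : Set V)

theorem finsum_pathWeight_listsOver_zero (x j : V) :
    ∑ᶠ c ∈ listsOver T 0, pathWeight ω (x :: c ++ [j]) = ω x j := by
  simp [listsOver_zero, pathWeight]

theorem finsum_pathWeight_listsOver_succ [Finite V] [Fintype T] (x j : V) (k : ℕ) :
    ∑ᶠ c ∈ listsOver T (k + 1), pathWeight ω (x :: c ++ [j]) =
      ∑ b : T, ω x b * ∑ᶠ c ∈ listsOver T k, pathWeight ω ((b : V) :: c ++ [j]) := by
  rw [finsum_mem_listsOver_succ, ← finsum_set_coe_eq_finsum_mem, finsum_eq_sum_of_fintype]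
  refine Finset.sum_congr rfl fun b _ => ?_
  rw [mul_finsum_mem' _ _ (listsOver_finite T k)]
  rfl

theorem finsum_pathWeight_listsOver_eq_pow_mulVec [Finite V] [Fintype T] [DecidableEq T]
    (j : V) (k : ℕ) (b : T) :
    ∑ᶠ c ∈ listsOver T k, pathWeight ω ((b : V) :: c ++ [j]) =
      ((Matrix.of fun a a' : T => ω a a') ^ k *ᵥ fun a => ω a j) b := by
  induction k generalizing b with
  | zero => simpa using finsum_pathWeight_listsOver_zero ω T b j
  | succ k ih =>
    rw [finsum_pathWeight_listsOver_succ, pow_succ', ← Matrix.mulVec_mulVec]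
    simp only [ih]
    rfl

end WalkSums

theorem rentryN_one_succ_eq_finsum_pathWeight {K : Type*} [Field K] {E : V → V → Prop}
    {S : Set V} {ω : V → V → K} (hω : ∀ i j, ¬E i j → ω i j = 0)
    (hcyc : ∀ l, IsCycleList E l → 2 < l.length → ∃ v ∈ l, v ∈ S)
    (hdiag : ∀ ℓ, ℓ ∉ S → ω ℓ ℓ = 0) {i j : V} (hi : i ∈ S) (hj : j ∈ S) (k : ℕ) :
    RentryN E S ω 1 (k + 1) i j = ∑ᶠ c ∈ listsOver Sᶜ k, pathWeight ω (i :: c ++ [j]) := by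
  have hinj : Function.Injective fun c : List V => i :: c ++ [j] :=
    fun _ _ h => List.cons_injective (List.append_left_injective [j] h)
  have hE : ∀ a b, ω a b ≠ 0 → E a b := fun a b => not_imp_comm.mp (hω a b)
  calc RentryN E S ω 1 (k + 1) i j
      = ∑ᶠ l ∈ {l | IsBranchList E S i j l ∧ l.length = k + 2}, pathWeight ω l :=
        finsum_mem_congr rfl fun l ⟨hl, _⟩ =>
          branchWeight_one_eq_pathWeight ω hl.1 fun v hv => hdiag v (hl.2.2.2.2.2.2 v hv)
    _ = ∑ᶠ l ∈ (fun c => i :: c ++ [j]) '' listsOver Sᶜ k, pathWeight ω l := by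
        refine finsum_mem_inter_support_eq' _ _ _ fun l hl => ?_
        rw [Set.mem_ofPred_eq, isBranchList_iff_s5 hi hj]
        constructor
        · rintro ⟨⟨c, rfl, hS, -, -⟩, hlen⟩
          exact ⟨c, ⟨by simpa using hlen, hS⟩, rfl⟩
        · rintro ⟨c, ⟨hlen, hS⟩, rfl⟩
          have hchain := isChain_of_pathWeight_ne_zero hl
          refine ⟨⟨c, rfl, hS, hchain.imp hE, ?_⟩, by simp [hlen]⟩
          exact nodup_of_isChain_of_forall_notMem hcyc hE (fun a ha h => h (hdiag a ha))
            (hchain.infix ⟨[i], [j], rfl⟩) hS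
    _ = _ := finsum_mem_image hinj.injOn

end BranchSums

/-- For a `1`-structural set `S` with zero diagonal weights off `S`,
`R^{(1)}_{ij}(G,S,1) = ω(i,j)` and for `n ≥ 2`,
`R^{(n)}_{ij}(G,S,1) = (M_{S S̄} (M_{S̄ S̄})^{n-2} M_{S̄ S})_{ij}` for all `i, j ∈ S`. -/
theorem branch_sums_as_block_products
    {V : Type*} [Fintype V] [DecidableEq V]
    (E : V → V → Prop) (ω : V → V → ℂ)
    (hω : ∀ i j, ¬ E i j → ω i j = 0)
    (S : Set V) [DecidablePred (· ∈ S)]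
    (hstr : IsStructural E ω 1 S)
    (hdiag : ∀ ℓ, ℓ ∉ S → ω ℓ ℓ = 0) :
    (∀ i j : ↥S, RentryN E S ω 1 1 (i : V) (j : V) = ω i j) ∧
      ∀ n : ℕ, 2 ≤ n → ∀ i j : ↥S,
        RentryN E S ω 1 n (i : V) (j : V) =
          ((Matrix.of fun (a : ↥S) (b : ↥(Sᶜ : Set V)) => ω a b) *
              (Matrix.of fun (a b : ↥(Sᶜ : Set V)) => ω a b) ^ (n - 2) *
              (Matrix.of fun (a : ↥(Sᶜ : Set V)) (b : ↥S) => ω a b)) i j := by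
  obtain ⟨-, hcyc, -⟩ := hstr
  have hR (k : ℕ) (i j : S) :=
    rentryN_one_succ_eq_finsum_pathWeight hω hcyc hdiag i.2 j.2 k
  refine ⟨fun i j => (hR 0 i j).trans (finsum_pathWeight_listsOver_zero ω _ i j),
    fun n hn i j => ?_⟩
  obtain ⟨k, rfl⟩ : ∃ k, n = k + 2 := ⟨n - 2, by omega⟩
  rw [hR (k + 1), finsum_pathWeight_listsOver_succ, Nat.add_sub_cancel, Matrix.mul_assoc,
    Matrix.mul_apply]
  refine Finset.sum_congr rfl fun b _ => ?_
  rw [finsum_pathWeight_listsOver_eq_pow_mulVec]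
  rfl
end

section
/- Let G = (V,E,ω) be a finite weighted directed graph with weighted adjacency matrix M_G, and let S ⊂ V be a 1-structural set of G with ω(ℓ,ℓ) = 0 for all ℓ ∈ V∖S. Write S̄ = V∖S and decompose M_G into the blocks M_{SS}, M_{SS̄}, M_{S̄S}, M_{S̄S̄}. Then the matrix I − M_{S̄S̄} is invertible, and the reduced matrix satisfies R_S(G,1) = M_{SS} + M_{SS̄} (I − M_{S̄S̄})^{−1} M_{S̄S}. -/
/-! Since the diagonal vanishes off `S` and every cycle that is not a loop meets `S`, the
support graph of `M_{S̄S̄}` has no cycles at all. Hence `M_{S̄S̄}` is nilpotent, so `I - M_{S̄S̄}` is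
invertible, and every walk through `S̄` is a path. With zero diagonal the branch weight at `λ = 1`
is the plain product of edge weights, so `R_{ij}` is the sum `W_{ij}` of the weights of all walks
from `i` to `j` through `S̄`. Splitting off the first edge gives
`W_{aj} = ω(a,j) + Σ_{b ∈ S̄} ω(a,b) W_{bj}`, that is, `R = M_{SS} + M_{SS̄} X` with
`(I - M_{S̄S̄}) X = M_{S̄S}`. -/

open Function Set

theorem List.eq_cons_tail_dropLast_append {α : Type*} {l : List α} {a c : α}
    (hl : 2 ≤ l.length) (ha : l.head? = some a) (hc : l.getLast? = some c) :
    l = a :: (l.tail.dropLast ++ [c]) := by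
  obtain _ | ⟨x, t⟩ := l
  · simp at hl
  obtain rfl : x = a := by simpa using ha
  have ht : t ≠ [] := by rintro rfl; simp at hl
  rw [List.getLast?_cons, List.getLast?_eq_some_getLast ht] at hc
  simp only [Option.getD_some, Option.some.injEq] at hc
  simpa [← hc] using (List.dropLast_append_getLast ht).symm

theorem exists_isCycleList_infix_of_not_nodup {α : Type*} {r : α → α → Prop} :
    ∀ {l : List α}, l.IsChain r → ¬ l.Nodup → ∃ c, IsCycleList r c ∧ c <:+: l
  | [], _, hl => absurd List.nodup_nil hl
  | x :: t, hc, hl => by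
    by_cases ht : t.Nodup
    · have hx : x ∈ t := by_contra fun hx => hl (List.nodup_cons.2 ⟨hx, ht⟩)
      obtain ⟨m, u, rfl⟩ := List.append_of_mem hx
      have hinf : x :: (m ++ [x]) <:+: x :: (m ++ x :: u) := ⟨[], u, by simp⟩
      have hxm : x ∉ m := fun h => (List.nodup_append.1 ht).2.2 x h x (by simp) rfl
      refine ⟨x :: (m ++ [x]), ⟨by simp, hc.infix hinf, ?_, ?_⟩, hinf⟩
      · rw [← List.cons_append, List.getLast?_concat]; rfl
      · rw [← List.cons_append, List.dropLast_concat]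
        exact List.nodup_cons.2 ⟨hxm, (List.nodup_append.1 ht).1⟩
    · obtain ⟨c, hcyc, hinf⟩ := exists_isCycleList_infix_of_not_nodup hc.tail ht
      exact ⟨c, hcyc, hinf.trans (List.suffix_cons x t).isInfix⟩

namespace Matrix

variable {ι R : Type*} [Fintype ι] [DecidableEq ι] [Semiring R]

theorem exists_isChain_of_pow_apply_ne_zero (N : Matrix ι ι R) :
    ∀ (k : ℕ) {a b : ι}, (N ^ k) a b ≠ 0 →
      ∃ l : List ι, l.IsChain (fun x y => N x y ≠ 0) ∧ l.head? = some a ∧ l.length = k + 1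
  | 0, a, _, _ => ⟨[a], List.isChain_singleton a, rfl, rfl⟩
  | k + 1, a, b, h => by
    rw [pow_succ', mul_apply] at h
    obtain ⟨c, -, hc⟩ := Finset.exists_ne_zero_of_sum_ne_zero h
    obtain ⟨l, hl, hhead, hlen⟩ :=
      exists_isChain_of_pow_apply_ne_zero N k (right_ne_zero_of_mul hc)
    refine ⟨a :: l, hl.cons ?_, rfl, by simp [hlen]⟩
    simpa [hhead] using left_ne_zero_of_mul hc

theorem isNilpotent_of_forall_isChain_nodup (N : Matrix ι ι R)
    (h : ∀ l : List ι, l.IsChain (fun x y => N x y ≠ 0) → l.Nodup) : IsNilpotent N := by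
  refine ⟨Fintype.card ι, ext fun a b => ?_⟩
  by_contra hab
  obtain ⟨l, hl, -, hlen⟩ := exists_isChain_of_pow_apply_ne_zero N _ hab
  have := (h l hl).length_le_card
  omega

end Matrix

section WeightedDigraph

variable {V K : Type*} [Field K]

def walkWeight (ω : V → V → K) : V → V → List V → K
  | a, c, [] => ω a c
  | a, c, b :: t => ω a b * walkWeight ω b c t

/-- Loops count as cycles here, since `[v, v]` is not `Nodup`. -/
def IsAcyclicOn (ω : V → V → K) (T : Set V) : Prop :=
  ∀ l : List V, (∀ v ∈ l, v ∈ T) → l.IsChain (fun x y => ω x y ≠ 0) → l.Nodup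

noncomputable def walkSum (ω : V → V → K) (T : Set V) (a c : V) : K :=
  ∑ᶠ t ∈ {t : List V | ∀ v ∈ t, v ∈ T}, walkWeight ω a c t

variable {ω : V → V → K} {T : Set V}

theorem isChain_of_walkWeight_ne_zero :
    ∀ {a c : V} {t : List V}, walkWeight ω a c t ≠ 0 →
      (a :: (t ++ [c])).IsChain (fun x y => ω x y ≠ 0)
  | _, _, [], h => List.isChain_pair.2 h
  | _, _, _ :: _, h =>
    (isChain_of_walkWeight_ne_zero (right_ne_zero_of_mul h)).cons
      (by simpa using left_ne_zero_of_mul h)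

theorem branchWeight_cons_append {a c : V} :
    ∀ {t : List V}, (∀ v ∈ t, ω v v = 0) →
      branchWeight ω 1 (a :: (t ++ [c])) = walkWeight ω a c t
  | [], _ => rfl
  | b :: t, hdiag => by
    obtain ⟨k, t', hk⟩ := List.exists_cons_of_ne_nil (List.concat_ne_nil c t)
    rw [List.cons_append, hk, branchWeight, ← hk, branchWeight_cons_append fun v hv =>
      hdiag v (List.mem_cons_of_mem b hv), hdiag b List.mem_cons_self, walkWeight]
    simp

theorem isAcyclicOn_compl {E : V → V → Prop} {S : Set V} (hω : ∀ i j, ¬ E i j → ω i j = 0)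
    (hcyc : ∀ l, IsCycleList E l → 2 < l.length → ∃ v ∈ l, v ∈ S)
    (hdiag : ∀ v, v ∉ S → ω v v = 0) : IsAcyclicOn ω Sᶜ := by
  intro l hl hchain
  by_contra hnd
  obtain ⟨c, ⟨hc2, hcω, hcl, hcnd⟩, hinf⟩ := exists_isCycleList_infix_of_not_nodup hchain hnd
  have hcS : ∀ v ∈ c, v ∉ S := fun v hv => hl v (hinf.subset hv)
  rcases hc2.eq_or_lt with h2 | h2
  · obtain ⟨a, b, rfl⟩ := List.length_eq_two.1 h2.symm
    obtain rfl : a = b := by simpa using hcl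
    exact List.isChain_pair.1 hcω (hdiag a (hcS a List.mem_cons_self))
  · have hcE : c.IsChain E := hcω.imp fun x y h => by_contra fun hE => h (hω x y hE)
    obtain ⟨v, hv, hvS⟩ := hcyc c ⟨hc2, hcE, hcl, hcnd⟩ h2
    exact hcS v hv hvS

theorem IsAcyclicOn.isNilpotent [Fintype T] [DecidableEq T] (hT : IsAcyclicOn ω T) :
    IsNilpotent (Matrix.of fun a b : T => ω a b) :=
  Matrix.isNilpotent_of_forall_isChain_nodup _ fun l hl =>
    have hlT : ∀ v ∈ l.map Subtype.val, v ∈ T := by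
      simp only [List.mem_map]
      rintro _ ⟨v, -, rfl⟩
      exact v.2
    (hT _ hlT ((List.isChain_map _).2 hl)).of_map _

theorem IsAcyclicOn.nodup_of_walkWeight_ne_zero (hT : IsAcyclicOn ω T) {a c : V} {t : List V}
    (ht : ∀ v ∈ t, v ∈ T) (hw : walkWeight ω a c t ≠ 0) : t.Nodup :=
  hT t ht ((isChain_of_walkWeight_ne_zero hw).infix ⟨[a], [c], by simp⟩)

theorem IsAcyclicOn.finite_inter_support_walkWeight [Finite V] (hT : IsAcyclicOn ω T)
    (a c : V) : ({t : List V | ∀ v ∈ t, v ∈ T} ∩ support (walkWeight ω a c)).Finite := by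
  cases nonempty_fintype V
  refine (List.finite_length_le V (Fintype.card V)).subset ?_
  rintro t ⟨ht, hw⟩
  exact (hT.nodup_of_walkWeight_ne_zero ht hw).length_le_card

theorem IsAcyclicOn.walkSum_eq [Finite V] [Fintype T] (hT : IsAcyclicOn ω T) (a c : V) :
    walkSum ω T a c = ω a c + ∑ b : T, ω a b * walkSum ω T b c := by
  set L := {t : List V | ∀ v ∈ t, v ∈ T}
  set F : V → Set (List V) := fun x => L ∩ support (walkWeight ω x c)
  have hF : ∀ x, (F x).Finite := (hT.finite_inter_support_walkWeight · c)
  have hsplit : ∀ t ∈ support (walkWeight ω a c),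
      t ∈ L ↔ t ∈ {[]} ∪ ⋃ b : T, (b.1 :: ·) '' F b := by
    rintro (_ | ⟨b, t⟩) ht
    · simp [L]
    · simp only [mem_union, mem_singleton_iff, reduceCtorEq, false_or, mem_iUnion, mem_image,
        List.cons.injEq]
      constructor
      · intro hbt
        exact ⟨⟨b, hbt b List.mem_cons_self⟩, t,
          ⟨fun v hv => hbt v (List.mem_cons_of_mem b hv), right_ne_zero_of_mul ht⟩, rfl, rfl⟩
      · rintro ⟨b', t', ⟨ht', -⟩, rfl, rfl⟩
        exact List.forall_mem_cons.2 ⟨b'.2, ht'⟩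
  have hdisj : Pairwise (Disjoint on fun b : T => (b.1 :: ·) '' F b) := by
    intro b b' hbb'
    refine disjoint_left.2 ?_
    rintro _ ⟨t, -, rfl⟩ ⟨t', -, heq⟩
    exact hbb' (Subtype.ext (List.cons.inj heq).1.symm)
  have hnil : Disjoint {[]} (⋃ b : T, (b.1 :: ·) '' F b) := by simp
  rw [walkSum, finsum_mem_inter_support_eq' _ _ _ hsplit,
    finsum_mem_union hnil (finite_singleton _) (finite_iUnion fun b => (hF b).image _),
    finsum_mem_singleton, finsum_mem_iUnion hdisj fun b => (hF b).image _,
    finsum_eq_sum_of_fintype]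
  congr 1
  refine Finset.sum_congr rfl fun b _ => ?_
  rw [finsum_mem_image List.cons_injective.injOn, walkSum,
    ← finsum_mem_inter_support (walkWeight ω b c), mul_finsum_mem]
  rfl

theorem Rentry_eq_walkSum {E : V → V → Prop} {S : Set V} (hω : ∀ i j, ¬ E i j → ω i j = 0)
    (hS : IsAcyclicOn ω Sᶜ) (hdiag : ∀ v, v ∉ S → ω v v = 0) {i j : V} (hi : i ∈ S)
    (hj : j ∈ S) : Rentry E S ω 1 i j = walkSum ω Sᶜ i j := by
  have hweight : ∀ t ∈ {t : List V | ∀ v ∈ t, v ∈ Sᶜ},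
      branchWeight ω 1 (i :: (t ++ [j])) = walkWeight ω i j t :=
    fun t ht => branchWeight_cons_append fun v hv => hdiag v (ht v hv)
  have hsupp : {l | IsBranchList E S i j l} ∩ support (branchWeight ω 1) =
      (fun t => i :: (t ++ [j])) '' ({t | ∀ v ∈ t, v ∈ Sᶜ} ∩ support (walkWeight ω i j)) := by
    ext l
    constructor
    · rintro ⟨⟨hl, -, hhead, hlast, -, -, hint⟩, hw⟩
      have hl' := List.eq_cons_tail_dropLast_append hl hhead hlast
      refine ⟨l.tail.dropLast, ⟨hint, ?_⟩, hl'.symm⟩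
      rwa [mem_support, hl', hweight _ hint] at hw
    · rintro ⟨t, ⟨ht, hw⟩, rfl⟩
      dsimp only
      have htnd := hS.nodup_of_walkWeight_ne_zero ht hw
      have hchain : (i :: (t ++ [j])).IsChain E :=
        (isChain_of_walkWeight_ne_zero hw).imp fun x y h => by_contra fun hE => h (hω x y hE)
      refine ⟨⟨by simp, hchain, rfl, ?_, ?_, ?_, ?_⟩, by rwa [mem_support, hweight t ht]⟩
      · rw [← List.cons_append, List.getLast?_concat]
      · exact htnd.append (List.nodup_singleton j) (List.disjoint_singleton.2 fun h => ht j h hj)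
      · rw [← List.cons_append, List.dropLast_concat]
        exact List.nodup_cons.2 ⟨fun h => ht i h hi, htnd⟩
      · simpa using ht
  rw [Rentry, walkSum, ← finsum_mem_inter_support (branchWeight ω 1), hsupp, finsum_mem_image,
    ← finsum_mem_inter_support (walkWeight ω i j)]
  · exact finsum_mem_congr rfl fun t ht => hweight t ht.1
  · exact fun t _ t' _ h => List.append_cancel_right (List.cons.inj h).2

end WeightedDigraph

/-- For a `1`-structural set `S` with zero diagonal weights off `S`,
the matrix `I - M_{S̄ S̄}` is invertible and
`R_S(G,1) = M_{SS} + M_{S S̄} (I - M_{S̄ S̄})⁻¹ M_{S̄ S}`. -/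
theorem reduced_matrix_block_formula
    {V : Type*} [Fintype V] [DecidableEq V]
    (E : V → V → Prop) (ω : V → V → ℂ)
    (hω : ∀ i j, ¬ E i j → ω i j = 0)
    (S : Set V) [DecidablePred (· ∈ S)]
    (hstr : IsStructural E ω 1 S)
    (hdiag : ∀ ℓ, ℓ ∉ S → ω ℓ ℓ = 0) :
    IsUnit (1 - Matrix.of fun (a b : ↥(Sᶜ : Set V)) => ω a b) ∧
      (Matrix.of fun (i j : ↥S) => Rentry E S ω 1 i j) =
        (Matrix.of fun (a b : ↥S) => ω a b) +
          (Matrix.of fun (a : ↥S) (b : ↥(Sᶜ : Set V)) => ω a b) *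
            (1 - Matrix.of fun (a b : ↥(Sᶜ : Set V)) => ω a b)⁻¹ *
            (Matrix.of fun (a : ↥(Sᶜ : Set V)) (b : ↥S) => ω a b) := by
  have hacyc : IsAcyclicOn ω Sᶜ := isAcyclicOn_compl hω hstr.2.1 hdiag
  have hunit := hacyc.isNilpotent.isUnit_one_sub
  refine ⟨hunit, ?_⟩
  set X : Matrix ↥(Sᶜ : Set V) ↥S ℂ := Matrix.of fun b j => walkSum ω Sᶜ b j
  have hR : (Matrix.of fun (i j : ↥S) => Rentry E S ω 1 i j) =
      (Matrix.of fun (a b : ↥S) => ω a b) +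
        (Matrix.of fun (a : ↥S) (b : ↥(Sᶜ : Set V)) => ω a b) * X := by
    ext i j
    rw [Matrix.of_apply, Rentry_eq_walkSum hω hacyc hdiag i.2 j.2, hacyc.walkSum_eq]
    simp [X, Matrix.mul_apply]
  have hX : (1 - Matrix.of fun (a b : ↥(Sᶜ : Set V)) => ω a b) * X =
      Matrix.of fun (a : ↥(Sᶜ : Set V)) (b : ↥S) => ω a b := by
    ext b j
    rw [Matrix.sub_mul, Matrix.one_mul, Matrix.sub_apply]
    simp only [X, Matrix.mul_apply, Matrix.of_apply]
    rw [hacyc.walkSum_eq (b : V) j, add_sub_cancel_right]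
  rw [hR, Matrix.mul_assoc, ← hX,
    Matrix.nonsing_inv_mul_cancel_left _ _ ((Matrix.isUnit_iff_isUnit_det _).1 hunit)]
end

section
/- Let m ∈ ℕ, m ≥ 1, and N ∈ ℝ, N > 0. The maximum of the function F(x₀,…,x_m) = Σ_{i=1}^{m} x_{i−1}(x_i − x_{i−1}) over the simplex Δ^m_N = {0 ≤ x₀ ≤ x₁ ≤ … ≤ x_m = N} equals m·N²/(2(m+1)), and it is attained at the point with x_i = (i+1)N/(m+1) for i = 0,…,m, i.e. at the arithmetic progression (N/(m+1), 2N/(m+1), …, N). -/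
/-!
Summation by parts gives `2 F(x) = x_m² - (x₀² + Σ (x_{i+1} - x_i)²)`, and the bracket is the sum
of squares of the `m + 1` increments of `0, x₀, …, x_m`, whose sum is `x_m`. By Cauchy–Schwarz it
is at least `x_m² / (m + 1)`, with equality when all increments are equal, i.e. at the arithmetic
progression.
-/

open Finset

def simplex (m : ℕ) (N : ℝ) : Set (ℕ → ℝ) :=
  {x | 0 ≤ x 0 ∧ (∀ i < m, x i ≤ x (i + 1)) ∧ x m = N}

theorem two_mul_sum_mul_sub (x : ℕ → ℝ) (n : ℕ) :
    2 * ∑ i ∈ range n, x i * (x (i + 1) - x i) =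
      x n ^ 2 - x 0 ^ 2 - ∑ i ∈ range n, (x (i + 1) - x i) ^ 2 := by
  induction n with
  | zero => simp
  | succ k ih => rw [sum_range_succ, sum_range_succ, mul_add, ih]; ring

theorem sq_sub_le_mul_sum_sq_sub (y : ℕ → ℝ) (n : ℕ) :
    (y n - y 0) ^ 2 ≤ n * ∑ i ∈ range n, (y (i + 1) - y i) ^ 2 := by
  rw [← sum_range_sub]
  simpa using sq_sum_le_card_mul_sum_sq (s := range n) (f := fun i => y (i + 1) - y i)

theorem sum_mul_sub_le (x : ℕ → ℝ) (m : ℕ) :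
    ∑ i ∈ range m, x i * (x (i + 1) - x i) ≤ m * x m ^ 2 / (2 * (m + 1)) := by
  set S := ∑ i ∈ range m, (x (i + 1) - x i) ^ 2
  -- Cauchy–Schwarz for the increments of the sequence `0, x₀, x₁, …`.
  have hCS : x m ^ 2 ≤ (m + 1) * (x 0 ^ 2 + S) := by
    have := sq_sub_le_mul_sum_sq_sub (fun i => if i = 0 then 0 else x (i - 1)) (m + 1)
    simp only [sum_range_succ' _ m, add_eq_zero, one_ne_zero, and_false, if_false,
      Nat.add_sub_cancel, if_true, sub_zero] at this
    push_cast at this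
    linarith
  have hsum := two_mul_sum_mul_sub x m
  rw [le_div_iff₀ (by positivity)]
  nlinarith [sq_nonneg (x 0)]

theorem sum_range_cast_add_one (n : ℕ) :
    ∑ i ∈ range n, ((i : ℝ) + 1) = n * (n + 1) / 2 := by
  induction n with
  | zero => simp
  | succ k ih => rw [sum_range_succ, ih]; push_cast; ring

theorem sum_arithProg_mul_sub (n : ℕ) (N : ℝ) :
    ∑ i ∈ range n, (((i : ℝ) + 1) * N / ((n : ℝ) + 1)) *
        ((((i : ℝ) + 1 + 1) * N / ((n : ℝ) + 1)) - ((i : ℝ) + 1) * N / ((n : ℝ) + 1)) =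
      (n : ℝ) * N ^ 2 / (2 * (n + 1)) := by
  have hn : (n : ℝ) + 1 ≠ 0 := by positivity
  have hterm : ∀ i : ℕ, (((i : ℝ) + 1) * N / ((n : ℝ) + 1)) *
      ((((i : ℝ) + 1 + 1) * N / ((n : ℝ) + 1)) - ((i : ℝ) + 1) * N / ((n : ℝ) + 1)) =
        ((i : ℝ) + 1) * (N / ((n : ℝ) + 1)) ^ 2 := fun i => by
    field_simp
    ring
  simp only [hterm, ← sum_mul, sum_range_cast_add_one]
  field_simp

theorem arithProg_mem_simplex (m : ℕ) {N : ℝ} (hN : 0 ≤ N) :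
    (fun i : ℕ => ((i : ℝ) + 1) * N / ((m : ℝ) + 1)) ∈ simplex m N := by
  refine ⟨by positivity, fun i _ => ?_, ?_⟩
  · push_cast
    gcongr
    linarith
  · field_simp

theorem simplex_sum_max_general
    (m : ℕ) (N : ℝ) (hN : 0 < N) :
    IsGreatest
      ((fun x : ℕ → ℝ => ∑ i ∈ Finset.range m, x i * (x (i + 1) - x i)) ''
        {x : ℕ → ℝ | 0 ≤ x 0 ∧ (∀ i < m, x i ≤ x (i + 1)) ∧ x m = N})
      ((m : ℝ) * N ^ 2 / (2 * (m + 1))) ∧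
    (fun i : ℕ => ((i : ℝ) + 1) * N / ((m : ℝ) + 1)) ∈
      {x : ℕ → ℝ | 0 ≤ x 0 ∧ (∀ i < m, x i ≤ x (i + 1)) ∧ x m = N} ∧
    (∑ i ∈ Finset.range m,
        (((i : ℝ) + 1) * N / ((m : ℝ) + 1)) *
          ((((i : ℝ) + 1 + 1) * N / ((m : ℝ) + 1)) - ((i : ℝ) + 1) * N / ((m : ℝ) + 1))) =
      (m : ℝ) * N ^ 2 / (2 * (m + 1)) := by
  have hmem := arithProg_mem_simplex m hN.le
  have hval := sum_arithProg_mul_sub m N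
  refine ⟨⟨⟨_, hmem, ?_⟩, ?_⟩, hmem, hval⟩
  · simpa only [Nat.cast_add, Nat.cast_one] using hval
  · rintro _ ⟨x, ⟨-, -, rfl⟩, rfl⟩
    exact sum_mul_sub_le x m

/-- For `m ≥ 1` and `N > 0`, the maximum of
`F(x₀,…,x_m) = Σ_{i=1}^m x_{i-1}(x_i - x_{i-1})` over the simplex
`Δ^m_N = {0 ≤ x₀ ≤ … ≤ x_m = N}` equals `m N² / (2(m+1))`, attained at the arithmetic
progression `x_i = (i+1) N / (m+1)`. -/
theorem simplex_sum_max
    (m : ℕ) (hm : 1 ≤ m) (N : ℝ) (hN : 0 < N) :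
    IsGreatest
      ((fun x : ℕ → ℝ => ∑ i ∈ Finset.range m, x i * (x (i + 1) - x i)) ''
        {x : ℕ → ℝ | 0 ≤ x 0 ∧ (∀ i < m, x i ≤ x (i + 1)) ∧ x m = N})
      ((m : ℝ) * N ^ 2 / (2 * (m + 1))) ∧
    (fun i : ℕ => ((i : ℝ) + 1) * N / ((m : ℝ) + 1)) ∈
      {x : ℕ → ℝ | 0 ≤ x 0 ∧ (∀ i < m, x i ≤ x (i + 1)) ∧ x m = N} ∧
    (∑ i ∈ Finset.range m,
        (((i : ℝ) + 1) * N / ((m : ℝ) + 1)) *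
          ((((i : ℝ) + 1 + 1) * N / ((m : ℝ) + 1)) - ((i : ℝ) + 1) * N / ((m : ℝ) + 1))) =
      (m : ℝ) * N ^ 2 / (2 * (m + 1)) :=
  simplex_sum_max_general m N hN
end
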